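/- For each integer k ≥ 2, the supremum of L(k,p) over p ∈ (0, 1-(1/3)^(1/3)] equals the supremum of L(k,p) over p ∈ (0,1). -/

import Mathlib

open Real Set Filter

/-- Expected number of tests per person in the Dorfman two-stage procedure
with group size `k` and prevalence `p`: `E 1 p = 1` and
`E k p = 1 - (1-p)^k + 1/k` for `k ≥ 2`. -/
noncomputable def E (k : ℕ) (p : ℝ) : ℝ :=
  if k = 1 then 1 else 1 - (1 - p) ^ k + 1 / k

/-- Optimal expected number of tests per person: infimum over group sizes `k ≥ 1`. -/
noncomputable def Estar (p : ℝ) : ℝ := ⨅ k : ℕ+, E k p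

/-- Loss of using group size `k` at prevalence `p`. -/
noncomputable def L (k : ℕ) (p : ℝ) : ℝ := E k p - Estar p

/-!
For `p` above the threshold `c = 1 - 3^(-1/3)` we have `(1-p)^3 < 1/3`, hence
`(1-p)^j ≤ 3^(-j/3) ≤ 1/j` for every `j ≥ 1` (as `j^3 ≤ 3^j`), so no group size beats
individual testing: `Estar p = 1` and `L k p ≤ 1/k`. On the other hand `Estar p → 0` as
`p → 0⁺`, so `L k p → 1/k` and the supremum over `(0, c]` already reaches `1/k`.
-/

open Topology

theorem Nat.cube_le_three_pow (j : ℕ) : j ^ 3 ≤ 3 ^ j := by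
  rcases le_or_gt j 2 with hj | hj
  · interval_cases j <;> decide
  induction j, hj using Nat.le_induction with
  | base => decide
  | succ n hn ih =>
    have hcube : (n + 1) ^ 3 ≤ 3 * n ^ 3 := by
      have h3 : 3 ≤ n := hn
      nlinarith [Nat.mul_le_mul h3 h3]
    have : 3 ^ (n + 1) = 3 ^ n * 3 := pow_succ 3 n
    omega

theorem pow_le_one_div_of_pow_three_le {x : ℝ} (hx : 0 ≤ x) (h3 : x ^ 3 ≤ 1 / 3) {j : ℕ}
    (hj : 1 ≤ j) : x ^ j ≤ 1 / j := by
  refine le_of_pow_le_pow_left₀ three_ne_zero (by positivity) ?_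
  have hj3 : (j : ℝ) ^ 3 ≤ 3 ^ j := by exact_mod_cast Nat.cube_le_three_pow j
  calc (x ^ j) ^ 3 = (x ^ 3) ^ j := by ring
    _ ≤ (1 / 3) ^ j := pow_le_pow_left₀ (by positivity) h3 j
    _ = 1 / 3 ^ j := by rw [one_div_pow]
    _ ≤ 1 / (j : ℝ) ^ 3 := one_div_le_one_div_of_le (by positivity) hj3
    _ = (1 / j) ^ 3 := by rw [one_div_pow]

theorem one_third_rpow_one_third_pow_three : (((1 : ℝ) / 3) ^ ((1 : ℝ) / 3)) ^ 3 = 1 / 3 := by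
  have h := Real.rpow_inv_natCast_pow (x := (1 : ℝ) / 3) (n := 3) (by norm_num) three_ne_zero
  norm_num at h ⊢
  exact h

theorem E_of_ne_one {k : ℕ} (hk : k ≠ 1) (p : ℝ) : E k p = 1 - (1 - p) ^ k + 1 / k :=
  if_neg hk

theorem E_zero {k : ℕ} (hk : k ≠ 1) : E k 0 = 1 / k := by
  simp [E_of_ne_one hk]

theorem continuous_E (k : ℕ) : Continuous (E k) := by
  unfold E
  split_ifs <;> fun_prop

theorem E_nonneg {p : ℝ} (hp0 : 0 ≤ p) (hp1 : p ≤ 1) (k : ℕ) : 0 ≤ E k p := by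
  unfold E
  split_ifs
  · exact zero_le_one
  · have : (1 - p) ^ k ≤ 1 := pow_le_one₀ (by linarith) (by linarith)
    have : (0 : ℝ) ≤ 1 / k := by positivity
    linarith

theorem E_le_two {p : ℝ} (hp1 : p ≤ 1) (k : ℕ) : E k p ≤ 2 := by
  unfold E
  split_ifs
  · exact one_le_two
  · have : 0 ≤ (1 - p) ^ k := pow_nonneg (by linarith) k
    have : (1 : ℝ) / k ≤ 1 := by simpa only [one_div] using Nat.cast_inv_le_one k
    linarith

theorem Estar_nonneg {p : ℝ} (hp0 : 0 ≤ p) (hp1 : p ≤ 1) : 0 ≤ Estar p :=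
  le_ciInf fun k => E_nonneg hp0 hp1 k

theorem Estar_le_E {p : ℝ} (hp0 : 0 ≤ p) (hp1 : p ≤ 1) (k : ℕ+) : Estar p ≤ E k p :=
  ciInf_le (f := fun j : ℕ+ => E j p) ⟨0, forall_mem_range.2 fun j => E_nonneg hp0 hp1 j⟩ k

theorem L_le_two {p : ℝ} (hp0 : 0 ≤ p) (hp1 : p ≤ 1) (k : ℕ) : L k p ≤ 2 := by
  have := E_le_two hp1 k
  have := Estar_nonneg hp0 hp1
  unfold L
  linarith

theorem one_le_Estar_of_pow_three_le {p : ℝ} (hp1 : p ≤ 1) (h3 : (1 - p) ^ 3 ≤ 1 / 3) :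
    1 ≤ Estar p := by
  refine le_ciInf fun j => ?_
  by_cases hj : (j : ℕ) = 1
  · simp [E, hj]
  · have := pow_le_one_div_of_pow_three_le (j := (j : ℕ)) (sub_nonneg.2 hp1) h3 j.pos
    rw [E_of_ne_one hj]
    linarith

theorem L_le_one_div {k : ℕ} (hk : k ≠ 1) {p : ℝ} (hp1 : p ≤ 1) (hE : 1 ≤ Estar p) :
    L k p ≤ 1 / k := by
  have : 0 ≤ (1 - p) ^ k := pow_nonneg (sub_nonneg.2 hp1) k
  rw [L, E_of_ne_one hk]
  linarith

/-- Each `E j` with `j ≥ 2` is continuous with `E j 0 = 1/j`, and `1/j` can be made small. -/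
theorem tendsto_Estar_zero : Tendsto Estar (𝓝[>] 0) (𝓝 0) := by
  have hunit : ∀ᶠ p in 𝓝[>] (0 : ℝ), p ∈ Ioo 0 1 := Ioo_mem_nhdsGT one_pos
  refine tendsto_order.2 ⟨fun a ha => ?_, fun a ha => ?_⟩
  · filter_upwards [hunit] with p hp
    exact ha.trans_le (Estar_nonneg hp.1.le hp.2.le)
  · obtain ⟨j, hj, hja⟩ := ((eventually_ge_atTop 2).and
      (tendsto_one_div_atTop_nhds_zero_nat.eventually (gt_mem_nhds ha))).exists
    have hEj : ∀ᶠ p in 𝓝[>] (0 : ℝ), E j p < a :=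
      nhdsWithin_le_nhds <| (continuous_E j).tendsto' 0 _ (E_zero (by omega)) |>.eventually
        (gt_mem_nhds hja)
    filter_upwards [hunit, hEj] with p hp hEp
    exact (Estar_le_E hp.1.le hp.2.le ⟨j, by omega⟩).trans_lt hEp

theorem tendsto_L_zero {k : ℕ} (hk : k ≠ 1) : Tendsto (L k) (𝓝[>] 0) (𝓝 (1 / k)) := by
  have h := (((continuous_E k).tendsto 0).mono_left nhdsWithin_le_nhds).sub tendsto_Estar_zero
  rw [E_zero hk, sub_zero] at h
  exact h

theorem sup_loss_restriction (k : ℕ) (hk : 2 ≤ k) :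
    sSup (L k '' Set.Ioc (0:ℝ) (1 - ((1:ℝ)/3) ^ ((1:ℝ)/3))) =
      sSup (L k '' Set.Ioo (0:ℝ) 1) := by
  set t : ℝ := ((1 : ℝ) / 3) ^ ((1 : ℝ) / 3)
  have ht0 : 0 < t := Real.rpow_pos_of_pos (by norm_num) _
  have ht1 : t < 1 := Real.rpow_lt_one (by norm_num) (by norm_num) (by norm_num)
  have hk1 : k ≠ 1 := by omega
  have hsub : Ioc 0 (1 - t) ⊆ Ioo 0 1 := fun p hp => ⟨hp.1, hp.2.trans_lt (by linarith)⟩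
  have hbdd : BddAbove (L k '' Ioo 0 1) :=
    ⟨2, forall_mem_image.2 fun p hp => L_le_two hp.1.le hp.2.le k⟩
  have hbdd' := hbdd.mono (image_mono hsub)
  have hlim : 1 / (k : ℝ) ≤ sSup (L k '' Ioc 0 (1 - t)) := by
    refine le_of_tendsto (tendsto_L_zero hk1) ?_
    filter_upwards [Ioc_mem_nhdsGT (by linarith : (0 : ℝ) < 1 - t)] with p hp
    exact le_csSup hbdd' (mem_image_of_mem _ hp)
  refine le_antisymm (csSup_le_csSup hbdd ?_ (image_mono hsub)) ?_
  · exact (nonempty_Ioc.2 (by linarith)).image _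
  refine csSup_le ((nonempty_Ioo.2 one_pos).image _) (forall_mem_image.2 fun p hp => ?_)
  rcases le_or_gt p (1 - t) with hpt | htp
  · exact le_csSup hbdd' (mem_image_of_mem _ ⟨hp.1, hpt⟩)
  · have h3 : (1 - p) ^ 3 ≤ 1 / 3 := by
      rw [← one_third_rpow_one_third_pow_three]
      exact pow_le_pow_left₀ (by linarith [hp.2]) (by linarith) 3
    exact (L_le_one_div hk1 hp.2.le (one_le_Estar_of_pow_three_le hp.2.le h3)).trans hlim
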